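/- arXiv:math/0603608 — 3 statements merged into one kernel-verified Lean document; each statement's English description precedes it below -/
import Mathlib

section
/- Let φ be the substitution φ(i) = 0^t(i+1) for i < m-1, φ(m-1) = 0^s with t ≥ s ≥ 2, and u_β its fixed point. Then the palindrome 0^{t+s-1} is a maximal palindrome of u_β: it is a factor of u_β, but a·0^{t+s-1}·a is not a factor of u_β for any letter a. -/
/-!
Write `u_β` as `φ(v)`, where `v` has no two adjacent nonzero letters (so `m-1` is always followed
by `0`). Then the zeros of `u_β` come in runs `0^t b` (from `φ(b-1)`) and `0^(s+t) 1` (from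
`φ(m-1) φ(0)`), `b ≠ 0`. Since `s ≥ 2`, a run between two nonzero letters never has length
`t + s - 1`, and no run is longer than `s + t`; this rules out `a 0^(t+s-1) a` for `a ≠ 0` and for
`a = 0`. On the other hand `00` occurs in `φ(0)`, `φ(j0)` contains `(j+1)0`, hence `(m-1)0` occurs
and `φ((m-1)0) = 0^(s+t) 1` contains `0^(t+s-1)`.
-/

/-- The canonical substitution associated with a simple Parry number `β` with
`d_β(1) = t t ⋯ t s` (`m` digits): `φ(i) = 0^t (i+1)` for `i ≤ m-2` and
`φ(m-1) = 0^s`.  Letters are encoded as natural numbers `0, …, m-1`. -/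
def phi (m t s : ℕ) : ℕ → List ℕ := fun a =>
  if a = m - 1 then List.replicate s 0 else List.replicate t 0 ++ [a + 1]

/-- Application of a morphism to a finite word. -/
def applyMorph (f : ℕ → List ℕ) (l : List ℕ) : List ℕ := l.flatMap f

/-- `w` is a factor of the fixed point `u_β = lim φⁿ(0)` of the substitution,
i.e. `w` is a factor of some `φⁿ(0)`. -/
def inLang (f : ℕ → List ℕ) (w : List ℕ) : Prop :=
  ∃ k : ℕ, w <:+: (applyMorph f)^[k] [0]

open List

namespace List

variable {α : Type*}

theorem eq_of_replicate_prefix_replicate_append_cons {N n : ℕ} {a b : α} {w : List α}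
    (h : replicate N a <+: replicate n a ++ b :: w) (hn : n < N) : b = a := by
  have := prefix_iff_getElem?.1 h n (by simpa using hn)
  simpa [getElem?_append_right] using this

theorem eq_of_replicate_append_singleton_prefix {L n : ℕ} {a y : α} {l : List α}
    (h : replicate L a ++ [y] <+: replicate n a ++ l) (hL : L < n) : y = a := by
  have := prefix_iff_getElem?.1 h L (by simp)
  simp [getElem?_append_left, hL] at this
  exact this.symm

theorem infix_replicate_append_cons {p w : List α} {a b : α} {n : ℕ}
    (h : p <:+: replicate n a ++ b :: w) :
    (∃ k ≤ n, p <+: replicate k a ++ b :: w) ∨ p <:+: w := by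
  induction n with
  | zero =>
    rcases infix_cons_iff.1 h with h | h
    · exact .inl ⟨0, le_rfl, h⟩
    · exact .inr h
  | succ n ih =>
    rw [replicate_succ, cons_append] at h
    rcases infix_cons_iff.1 h with h | h
    · exact .inl ⟨n + 1, le_rfl, by rwa [replicate_succ, cons_append]⟩
    · obtain ⟨k, hk, h⟩ | h := ih h
      · exact .inl ⟨k, hk.trans n.le_succ, h⟩
      · exact .inr h

theorem isChain_replicate_append {R : α → α → Prop} {a : α} (ha : ∀ b, R a b) (n : ℕ)
    {l : List α} (hl : l.IsChain R) : (replicate n a ++ l).IsChain R := by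
  induction n with
  | zero => simpa
  | succ n ih =>
    rw [replicate_succ, cons_append]
    exact ih.cons fun b _ => ha b

end List

/-- The shape of `φ(v)` for `v` without two adjacent nonzero letters; the runs `0^(s+t)` come from
`φ(m-1) φ(0) = 0^(s+t) 1`. -/
inductive ZeroRuns (t s : ℕ) : List ℕ → Prop
  | nil : ZeroRuns t s []
  | zeros : ZeroRuns t s (replicate s 0)
  | cons {n b : ℕ} {w : List ℕ} :
      n = t ∨ n = s + t → b ≠ 0 → ZeroRuns t s w → ZeroRuns t s (replicate n 0 ++ b :: w)

namespace ZeroRuns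

variable {t s : ℕ} {w : List ℕ}

theorem not_replicate_append_prefix (hw : ZeroRuns t s w) (ht : t ≠ 0) (hs : 2 ≤ s)
    {y : ℕ} (hy : y ≠ 0) : ¬ replicate (t + s - 1) 0 ++ [y] <+: w := by
  intro h
  have hlen := h.length_le
  cases hw with
  | nil => simp at hlen
  | zeros => simp at hlen; omega
  | cons hn hb _ =>
    rcases hn with rfl | rfl
    · exact hb <| eq_of_replicate_prefix_replicate_append_cons
        ((prefix_append _ _).trans h) (by omega)
    · exact hy (eq_of_replicate_append_singleton_prefix h (by omega))

theorem not_infix (hw : ZeroRuns t s w) (ht : t ≠ 0) (hs : 2 ≤ s) (x : ℕ) :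
    ¬ x :: (replicate (t + s - 1) 0 ++ [x]) <:+: w := by
  induction hw with
  | nil => exact fun h => by simpa using h.length_le
  | zeros =>
    intro h
    have hlen := h.length_le
    simp at hlen
    omega
  | @cons n b w hn hb hw ih =>
    intro h
    obtain ⟨k, hk, h⟩ | h := infix_replicate_append_cons h
    · cases k with
      | zero =>
        rw [replicate_zero, nil_append] at h
        obtain ⟨rfl, hrest⟩ := cons_prefix_cons.1 h
        exact hw.not_replicate_append_prefix ht hs hb hrest
      | succ k =>
        rw [replicate_succ, cons_append] at h
        obtain ⟨rfl, hrest⟩ := cons_prefix_cons.1 h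
        rw [← replicate_succ'] at hrest
        exact hb (eq_of_replicate_prefix_replicate_append_cons hrest (by omega))
    · exact ih h

end ZeroRuns

section Morphism

variable {f : ℕ → List ℕ}

@[simp]
theorem applyMorph_nil : applyMorph f [] = [] := rfl

@[simp]
theorem applyMorph_cons (a : ℕ) (l : List ℕ) :
    applyMorph f (a :: l) = f a ++ applyMorph f l := flatMap_cons

theorem applyMorph_infix {w v : List ℕ} (h : w <:+: v) : applyMorph f w <:+: applyMorph f v := by
  obtain ⟨u, u', rfl⟩ := h
  exact ⟨applyMorph f u, applyMorph f u', by simp [applyMorph]⟩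

theorem inLang.of_infix {w w' : List ℕ} (h : inLang f w) (hw : w' <:+: w) : inLang f w' :=
  let ⟨k, hk⟩ := h
  ⟨k, hw.trans hk⟩

theorem inLang.applyMorph {w : List ℕ} (h : inLang f w) : inLang f (applyMorph f w) :=
  let ⟨k, hk⟩ := h
  ⟨k + 1, by rw [Function.iterate_succ_apply']; exact applyMorph_infix hk⟩

end Morphism

section Phi

variable {m t s : ℕ}

@[simp]
theorem phi_last : phi m t s (m - 1) = replicate s 0 := if_pos rfl

theorem phi_of_ne {a : ℕ} (ha : a ≠ m - 1) : phi m t s a = replicate t 0 ++ [a + 1] := if_neg ha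

theorem isChain_applyMorph_phi (ht : t ≠ 0) (hs : s ≠ 0) (v : List ℕ) :
    (applyMorph (phi m t s) v).IsChain (fun a b => a = 0 ∨ b = 0) := by
  have hblock : ∀ a, (phi m t s a).IsChain (fun a b => a = 0 ∨ b = 0) ∧
      (phi m t s a).head? = some 0 := by
    intro a
    obtain ⟨t, rfl⟩ := Nat.exists_eq_succ_of_ne_zero ht
    obtain ⟨s, rfl⟩ := Nat.exists_eq_succ_of_ne_zero hs
    unfold phi
    have hzero : ∀ b : ℕ, (0 = 0 ∨ b = 0) := fun _ => .inl rfl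
    split_ifs
    · exact ⟨by simpa using isChain_replicate_append hzero (s + 1) isChain_nil, rfl⟩
    · exact ⟨isChain_replicate_append hzero (t + 1) (isChain_singleton _), rfl⟩
  induction v with
  | nil => exact isChain_nil
  | cons a v ih =>
    rw [applyMorph_cons]
    refine (hblock a).1.append ih fun _ _ b hb => .inr ?_
    cases v with
    | nil => simp at hb
    | cons c v =>
      simp only [applyMorph_cons, head?_append, (hblock c).2, Option.some_or, Option.mem_def,
        Option.some.injEq] at hb
      exact hb.symm

theorem zeroRuns_applyMorph_phi (hm : 2 ≤ m) :
    ∀ {v : List ℕ}, v.IsChain (fun a b => a = 0 ∨ b = 0) →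
      ZeroRuns t s (applyMorph (phi m t s) v)
  | [], _ => .nil
  | [c], _ => by
    by_cases hc : c = m - 1
    · simpa [hc] using ZeroRuns.zeros
    · simpa [phi_of_ne hc] using ZeroRuns.cons (.inl rfl) c.succ_ne_zero .nil
  | c :: c' :: v, hv => by
    obtain ⟨hcc', hv'⟩ := isChain_cons_cons.1 hv
    by_cases hc : c = m - 1
    · have hc' : c' = 0 := hcc'.resolve_left (by omega)
      subst hc hc'
      have hw := ZeroRuns.cons (.inr rfl) one_ne_zero (zeroRuns_applyMorph_phi hm hv'.tail)
      convert hw using 1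
      simp only [applyMorph_cons, phi_last, phi_of_ne (show 0 ≠ m - 1 by omega), tail_cons,
        zero_add, replicate_add, append_assoc, singleton_append]
    · simpa [phi_of_ne hc] using ZeroRuns.cons (.inl rfl) c.succ_ne_zero
        (zeroRuns_applyMorph_phi hm hv')

theorem inLang_phi_cons_zero (hm : 2 ≤ m) (ht : 2 ≤ t) {j : ℕ} (hj : j ≤ m - 1) :
    inLang (phi m t s) [j, 0] := by
  obtain ⟨t, rfl⟩ := Nat.exists_eq_add_of_le' ht
  induction j with
  | zero =>
    refine (show inLang (phi m (t + 2) s) [0] from ⟨0, infix_refl _⟩).applyMorph.of_infix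
      ⟨[], replicate t 0 ++ [1], ?_⟩
    simp [phi_of_ne (show 0 ≠ m - 1 by omega), replicate_succ]
  | succ j ih =>
    refine (ih (by omega)).applyMorph.of_infix
      ⟨replicate (t + 2) 0, 0 :: replicate t 0 ++ [1], ?_⟩
    simp [phi_of_ne (show j ≠ m - 1 by omega), phi_of_ne (show 0 ≠ m - 1 by omega),
      replicate_succ]

theorem inLang_phi_replicate (hm : 2 ≤ m) (ht : 2 ≤ t) :
    inLang (phi m t s) (replicate (t + s - 1) 0) := by
  refine (inLang_phi_cons_zero hm ht (le_refl (m - 1))).applyMorph.of_infix ⟨[], [0, 1], ?_⟩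
  simp only [applyMorph_cons, applyMorph_nil, phi_last, phi_of_ne (show 0 ≠ m - 1 by omega),
    nil_append, append_nil, ← append_assoc, ← replicate_add,
    show s + t = t + s - 1 + 1 by omega, replicate_succ']
  simp

end Phi

/-- For `t ≥ s ≥ 2`, the palindrome `0^{t+s-1}` is a maximal palindrome of
`u_β`: it is a factor of `u_β`, but `a·0^{t+s-1}·a` is not a factor of `u_β`
for any letter `a`. -/
theorem stmt9 (m t s : ℕ) (hm : 2 ≤ m) (hs : 2 ≤ s) (hts : s ≤ t) :
    inLang (phi m t s) (List.replicate (t + s - 1) 0) ∧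
      ∀ a : ℕ, a < m →
        ¬ inLang (phi m t s) ([a] ++ List.replicate (t + s - 1) 0 ++ [a]) := by
  have ht : 2 ≤ t := hs.trans hts
  refine ⟨inLang_phi_replicate hm ht, fun a _ ⟨k, hk⟩ => ?_⟩
  have hchain : ∀ n, ((applyMorph (phi m t s))^[n] [0]).IsChain (fun a b => a = 0 ∨ b = 0)
    | 0 => isChain_singleton 0
    | n + 1 => by
      rw [Function.iterate_succ_apply']
      exact isChain_applyMorph_phi (by omega) (by omega) _
  cases k with
  | zero => simpa using hk.length_le
  | succ k =>
    rw [Function.iterate_succ_apply'] at hk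
    exact (zeroRuns_applyMorph_phi hm (hchain k)).not_infix (by omega) hs a hk
end

section
/- Define V^(1) = 0^t and V^(n+1) = φ(V^(n))·0^t, where φ is the substitution φ(i) = 0^t(i+1) for i < m-1, φ(m-1) = 0^s, with t ≥ s ≥ 1 and t even. Then for every n ≥ 1, V^(n) is a palindrome of even length and V^(n) is a central factor of V^(n+1). -/
/-- The palindromes `V⁽ⁿ⁾`: `V 0 = 0^t` (the paper's `V⁽¹⁾`) and
`V (n+1) = φ(V n)·0^t`. -/
def Vseq (m t s : ℕ) : ℕ → List ℕ
  | 0 => List.replicate t 0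
  | n + 1 => applyMorph (phi m t s) (Vseq m t s n) ++ List.replicate t 0

/-!
Everything rests on the conjugacy `0^t · φ(a)ᴿ = φ(a) · 0^t`, valid for every letter `a`,
which extends to `0^t · φ(v)ᴿ = φ(vᴿ) · 0^t` for every word `v`. Applied to `v = V⁽ⁿ⁾` it
propagates the palindromicity of `V⁽ⁿ⁾` to `V⁽ⁿ⁺¹⁾ = φ(V⁽ⁿ⁾) 0^t`, and applied to `v = w` it
turns `V⁽ⁿ⁺¹⁾ = w V⁽ⁿ⁾ wᴿ` into `V⁽ⁿ⁺²⁾ = φ(w) V⁽ⁿ⁺¹⁾ φ(w)ᴿ`; the induction starts from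
`0^t = 0^k 0^k` with `t = 2k`. Even length follows since `|V⁽ⁿ⁺¹⁾| = |V⁽ⁿ⁾| + 2|w|`.
-/

section Morphism

variable (f : ℕ → List ℕ)

theorem applyMorph_append (l l' : List ℕ) :
    applyMorph f (l ++ l') = applyMorph f l ++ applyMorph f l' :=
  List.flatMap_append

theorem append_reverse_applyMorph {u : List ℕ} (hf : ∀ a, u ++ (f a).reverse = f a ++ u)
    (l : List ℕ) : u ++ (applyMorph f l).reverse = applyMorph f l.reverse ++ u := by
  induction l with
  | nil => simp [applyMorph]
  | cons a l ih =>
    calc u ++ (applyMorph f (a :: l)).reverse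
        = (u ++ (applyMorph f l).reverse) ++ (f a).reverse := by simp [applyMorph]
      _ = applyMorph f l.reverse ++ (u ++ (f a).reverse) := by rw [ih, List.append_assoc]
      _ = applyMorph f (a :: l).reverse ++ u := by
        rw [hf, List.reverse_cons, applyMorph_append]; simp [applyMorph]

end Morphism

theorem replicate_append_reverse_phi (m t s a : ℕ) :
    List.replicate t 0 ++ (phi m t s a).reverse = phi m t s a ++ List.replicate t 0 := by
  unfold phi
  split_ifs <;> simp [Nat.add_comm]

theorem reverse_Vseq (m t s n : ℕ) : (Vseq m t s n).reverse = Vseq m t s n := by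
  induction n with
  | zero => exact List.reverse_replicate
  | succ n ih =>
    rw [Vseq, List.reverse_append, List.reverse_replicate,
      append_reverse_applyMorph _ (replicate_append_reverse_phi m t s), ih]

theorem Vseq_succ_eq_central (m t s : ℕ) (ht : Even t) (n : ℕ) :
    ∃ w, Vseq m t s (n + 1) = w ++ Vseq m t s n ++ w.reverse := by
  have hconj := append_reverse_applyMorph _ (replicate_append_reverse_phi m t s)
  induction n with
  | zero =>
    obtain ⟨k, hk⟩ := ht
    refine ⟨applyMorph (phi m t s) (List.replicate k 0), ?_⟩
    have hsplit : applyMorph (phi m t s) (List.replicate t 0)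
        = applyMorph (phi m t s) (List.replicate k 0)
          ++ applyMorph (phi m t s) (List.replicate k 0) := by
      rw [hk, List.replicate_add, applyMorph_append]
    show applyMorph (phi m t s) (List.replicate t 0) ++ List.replicate t 0
      = applyMorph (phi m t s) (List.replicate k 0) ++ List.replicate t 0
        ++ (applyMorph (phi m t s) (List.replicate k 0)).reverse
    rw [List.append_assoc, hconj, List.reverse_replicate, hsplit, List.append_assoc]
  | succ n ih =>
    obtain ⟨w, hw⟩ := ih
    refine ⟨applyMorph (phi m t s) w, ?_⟩
    show applyMorph (phi m t s) (Vseq m t s (n + 1)) ++ List.replicate t 0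
      = applyMorph (phi m t s) w ++ (applyMorph (phi m t s) (Vseq m t s n) ++ List.replicate t 0)
        ++ (applyMorph (phi m t s) w).reverse
    rw [hw, applyMorph_append, applyMorph_append, List.append_assoc, List.append_assoc, ← hconj]
    simp only [List.append_assoc]

theorem even_length_Vseq (m t s : ℕ) (ht : Even t) (n : ℕ) : Even (Vseq m t s n).length := by
  induction n with
  | zero => simpa [Vseq] using ht
  | succ n ih =>
    obtain ⟨w, hw⟩ := Vseq_succ_eq_central m t s ht n
    have hlen : (w ++ Vseq m t s n ++ w.reverse).length
        = (Vseq m t s n).length + 2 * w.length := by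
      simp only [List.length_append, List.length_reverse]; ring
    rw [hw, hlen]
    exact ih.add (even_two_mul _)

theorem stmt15_general (m t s : ℕ) (ht : Even t) (n : ℕ) :
    (Vseq m t s n).reverse = Vseq m t s n ∧ Even (Vseq m t s n).length ∧
      ∃ w : List ℕ, Vseq m t s (n + 1) = w ++ Vseq m t s n ++ w.reverse :=
  ⟨reverse_Vseq m t s n, even_length_Vseq m t s ht n, Vseq_succ_eq_central m t s ht n⟩

/-- For `t` even, every `V⁽ⁿ⁾` is a palindrome of even length and `V⁽ⁿ⁾` is a
central factor of `V⁽ⁿ⁺¹⁾`. -/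
theorem stmt15 (m t s : ℕ) (hm : 1 ≤ m) (hs : 1 ≤ s) (hts : s ≤ t)
    (ht : Even t) (n : ℕ) :
    (Vseq m t s n).reverse = Vseq m t s n ∧ Even (Vseq m t s n).length ∧
      ∃ w : List ℕ, Vseq m t s (n + 1) = w ++ Vseq m t s n ++ w.reverse :=
  stmt15_general m t s ht n
end

section
/- Define V^(1) = 0^t and V^(n+1) = φ(V^(n))·0^t, where φ is the substitution φ(i) = 0^t(i+1) for i < m-1, φ(m-1) = 0^s, with t odd and s even, t ≥ s ≥ 2. Then for every n ≥ 1, V^(n) is a palindrome of odd length whose center is the letter congruent to n-1 modulo m, and V^(n) is a central factor of V^(n+m). -/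
def IsCentralFactor {α : Type*} (q p : List α) : Prop :=
  ∃ w : List α, p = w ++ q ++ w.reverse

namespace IsCentralFactor

variable {α : Type*}

theorem refl (p : List α) : IsCentralFactor p p := ⟨[], by simp⟩

theorem trans {q p r : List α} (hqp : IsCentralFactor q p) (hpr : IsCentralFactor p r) :
    IsCentralFactor q r := by
  obtain ⟨v, rfl⟩ := hqp
  obtain ⟨w, rfl⟩ := hpr
  exact ⟨w ++ v, by simp⟩

theorem flatMap_append {β : Type*} {f : α → List β} {z : List β}
    (hf : ∀ a, f a ++ z = z ++ (f a).reverse) {q p : List α} (h : IsCentralFactor q p) :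
    IsCentralFactor (q.flatMap f ++ z) (p.flatMap f ++ z) := by
  obtain ⟨w, rfl⟩ := h
  have hrev : ∀ v : List α, v.reverse.flatMap f ++ z = z ++ (v.flatMap f).reverse := by
    intro v
    induction v with
    | nil => simp
    | cons a v ih => simp [List.append_assoc, hf a, ← List.append_assoc _ z, ih]
  exact ⟨w.flatMap f, by simp [hrev]⟩

end IsCentralFactor

theorem phi_append_replicate (m t s a : ℕ) :
    phi m t s a ++ List.replicate t 0 = List.replicate t 0 ++ (phi m t s a).reverse := by
  unfold phi
  split
  · simp [Nat.add_comm]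
  · simp

theorem IsCentralFactor.flatMap_phi_append {m t s : ℕ} {q p : List ℕ}
    (h : IsCentralFactor q p) :
    IsCentralFactor (q.flatMap (phi m t s) ++ List.replicate t 0)
      (p.flatMap (phi m t s) ++ List.replicate t 0) :=
  h.flatMap_append (phi_append_replicate m t s)

def centerBlock (j c : ℕ) : List ℕ := List.replicate j 0 ++ [c] ++ List.replicate j 0

theorem centerBlock_zero (k : ℕ) : centerBlock k 0 = List.replicate (2 * k + 1) 0 := by
  simp only [centerBlock, ← List.replicate_one, List.replicate_append_replicate]
  congr 1
  omega

theorem isCentralFactor_singleton_centerBlock (j c : ℕ) :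
    IsCentralFactor [c] (centerBlock j c) :=
  ⟨List.replicate j 0, by simp [centerBlock]⟩

theorem isCentralFactor_centerBlock {j k : ℕ} (c : ℕ) (h : j ≤ k) :
    IsCentralFactor (centerBlock j c) (centerBlock k c) := by
  obtain ⟨a, rfl⟩ := Nat.exists_eq_add_of_le' h
  refine ⟨List.replicate a 0, ?_⟩
  simp only [centerBlock, List.reverse_replicate, ← List.append_assoc,
    List.replicate_append_replicate]
  simp only [List.append_assoc, List.replicate_append_replicate, Nat.add_comm j a]

theorem isCentralFactor_centerBlock_phi_append {m t s j c : ℕ} (hj : t = 2 * j + 1)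
    (hs : Even s) (hc : c < m) :
    IsCentralFactor (centerBlock j ((c + 1) % m)) (phi m t s c ++ List.replicate t 0) := by
  obtain ⟨e, he⟩ := hs
  unfold phi
  split
  case isTrue hlast =>
    rw [show c + 1 = m by omega, Nat.mod_self, List.replicate_append_replicate,
      show s + t = 2 * (e + j) + 1 by omega, ← centerBlock_zero]
    exact isCentralFactor_centerBlock 0 (by omega)
  case isFalse hlast =>
    rw [Nat.mod_eq_of_lt (by omega : c + 1 < m)]
    exact isCentralFactor_centerBlock (c + 1) (by omega)

theorem isCentralFactor_centerBlock_Vseq {m t s j : ℕ} (hm : 1 ≤ m) (hj : t = 2 * j + 1)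
    (hs : Even s) (n : ℕ) : IsCentralFactor (centerBlock j (n % m)) (Vseq m t s n) := by
  induction n with
  | zero => simpa [Vseq, centerBlock_zero, hj] using IsCentralFactor.refl _
  | succ n ih =>
    have hnext := isCentralFactor_centerBlock_phi_append (m := m) hj hs (Nat.mod_lt n hm)
    rw [Nat.mod_add_mod] at hnext
    have hcenter := (isCentralFactor_singleton_centerBlock j (n % m)).flatMap_phi_append
      (m := m) (t := t) (s := s)
    rw [List.flatMap_singleton] at hcenter
    exact (hnext.trans hcenter).trans ih.flatMap_phi_append

theorem isCentralFactor_Vseq_add {m t s k : ℕ}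
    (h : IsCentralFactor (Vseq m t s 0) (Vseq m t s k)) (n : ℕ) :
    IsCentralFactor (Vseq m t s n) (Vseq m t s (n + k)) := by
  induction n with
  | zero => simpa using h
  | succ n ih =>
    rw [Nat.add_right_comm]
    exact ih.flatMap_phi_append

theorem stmt16_general (m t s : ℕ) (hm : 1 ≤ m)
    (ht : Odd t) (hse : Even s) (n : ℕ) :
    (∃ w : List ℕ, Vseq m t s n = w ++ [n % m] ++ w.reverse) ∧
      ∃ w' : List ℕ, Vseq m t s (n + m) = w' ++ Vseq m t s n ++ w'.reverse := by
  obtain ⟨j, hj⟩ := ht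
  have hblock := isCentralFactor_centerBlock_Vseq (s := s) hm hj hse
  refine ⟨(isCentralFactor_singleton_centerBlock j _).trans (hblock n),
    isCentralFactor_Vseq_add ?_ n⟩
  have hVseq_zero : Vseq m t s 0 = centerBlock j 0 := by
    rw [centerBlock_zero, Vseq, hj]
  simpa [Nat.mod_self, hVseq_zero] using hblock m

/-- For `t` odd and `s` even (`t ≥ s ≥ 2`), the palindrome `V⁽ⁿ⁺¹⁾ = Vseq n`
has odd length with center the letter `n mod m` (i.e. congruent to the paper's
`n - 1` modulo `m`), and it is a central factor of `V⁽ⁿ⁺¹⁺ᵐ⁾`. -/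
theorem stmt16 (m t s : ℕ) (hm : 1 ≤ m) (hs : 2 ≤ s) (hts : s ≤ t)
    (ht : Odd t) (hse : Even s) (n : ℕ) :
    (∃ w : List ℕ, Vseq m t s n = w ++ [n % m] ++ w.reverse) ∧
      ∃ w' : List ℕ, Vseq m t s (n + m) = w' ++ Vseq m t s n ++ w'.reverse :=
  stmt16_general m t s hm ht hse n
end
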